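/- Let 𝕋 = ℝ/ℤ and let U : 𝕋 → ℝ be smooth. Define the maps f(U) := ⟨U⟩ (U − ⟨U⟩) and g(U) := U_{3x} + 6 U U_x on C^∞(𝕋,ℝ). Then their Lie bracket satisfies [f, g](U) = −6 ⟨U⟩ U U_x + 6 ⟨U⟩² U_x. -/

import Mathlib

/-- The average `⟨F⟩ = ∫_𝕋 F(x) dx` of a (1-periodic) function on the circle. -/
noncomputable def avg (F : ℝ → ℝ) : ℝ := ∫ x in (0:ℝ)..1, F x

/-- The map `f(U) = ⟨U⟩(U − ⟨U⟩)`. -/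
noncomputable def opf (F : ℝ → ℝ) : ℝ → ℝ := fun x => avg F * (F x - avg F)

/-- The KdV map `g(U) = U_{3x} + 6 U U_x`. -/
noncomputable def opg (F : ℝ → ℝ) : ℝ → ℝ := fun x =>
  iteratedDeriv 3 F x + 6 * F x * deriv F x

lemma periodic_deriv' {f : ℝ → ℝ} (hf : Function.Periodic f 1) :
    Function.Periodic (deriv f) 1 := by
  intro y
  have h1 : (fun x => f (x + 1)) = f := funext hf
  have h2 := deriv_comp_add_const f 1 y
  rw [h1] at h2
  exact h2.symm

lemma iteratedDeriv_affine (c d : ℝ) {f : ℝ → ℝ} (hf : ContDiff ℝ (⊤ : ℕ∞) f) (x : ℝ) :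
    iteratedDeriv 3 (fun y => c * f y + d) x = c * iteratedDeriv 3 f x := by
  have hf3 : ContDiff ℝ (3 : ℕ) f := hf.of_le (WithTop.coe_le_coe.mpr le_top)
  have h0 : (fun y => c * f y + d) = ((fun y => c * f y) + fun _ => d) := rfl
  rw [h0, ← iteratedDerivWithin_univ, ← iteratedDerivWithin_univ,
    iteratedDerivWithin_add (Set.mem_univ x) uniqueDiffOn_univ
      (contDiff_const.mul hf3).contDiffWithinAt contDiffWithinAt_const,
    iteratedDerivWithin_const_mul (Set.mem_univ x) uniqueDiffOn_univ c hf3.contDiffWithinAt]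
  have hc : iteratedDerivWithin 3 (fun _ : ℝ => d) Set.univ x = 0 := by
    rw [iteratedDerivWithin_univ]
    simp [show (3:ℕ) = 2 + 1 from rfl, iteratedDeriv_succ]
  rw [hc, add_zero]

/-- The Lie bracket `[f,g](U)` of `f(U) = ⟨U⟩(U − ⟨U⟩)` and `g(U) = U_{3x} + 6UU_x`
equals `−6⟨U⟩UU_x + 6⟨U⟩²U_x`. -/
theorem stmt_9 (U : ℝ → ℝ) (hU : ContDiff ℝ (⊤ : ℕ∞) U) (hper : Function.Periodic U 1) :
    ∀ x : ℝ,
      HasDerivAt (fun ε : ℝ =>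
          opf (fun y => U y + ε * opg U y) x - opg (fun y => U y + ε * opf U y) x)
        (-6 * avg U * U x * deriv U x + 6 * (avg U) ^ 2 * deriv U x) 0 := by
  intro x
  have hUd : Differentiable ℝ U := hU.differentiable (by simp)
  -- continuity of opg U
  have hcg : Continuous (opg U) := by
    have h3 : Continuous (iteratedDeriv 3 U) := hU.continuous_iteratedDeriv 3 (WithTop.coe_le_coe.mpr le_top)
    have hd : Continuous (deriv U) := (hU.continuous_iteratedDeriv 1 (by simp)).congr
      (by simp [iteratedDeriv_one])
    exact h3.add ((continuous_const.mul hU.continuous).mul hd)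
  -- fundamental theorem: ∫ opg U = 0
  have hd2 : ∀ y : ℝ, HasDerivAt (fun z => iteratedDeriv 2 U z + 3 * U z ^ 2) (opg U y) y := by
    intro y
    have hdiff : DifferentiableAt ℝ (iteratedDeriv 2 U) y :=
      (hU.differentiable_iteratedDeriv 2 (WithTop.coe_lt_coe.mpr (ENat.coe_lt_top 2))).differentiableAt
    have h1 : HasDerivAt (iteratedDeriv 2 U) (iteratedDeriv 3 U y) y := by
      have h3 : iteratedDeriv 3 U y = deriv (iteratedDeriv 2 U) y := by
        rw [show (3:ℕ) = 2 + 1 from rfl, iteratedDeriv_succ]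
      rw [h3]
      exact hdiff.hasDerivAt
    have hu : HasDerivAt U (deriv U y) y := (hUd y).hasDerivAt
    have h2 : HasDerivAt (fun z => 3 * U z ^ 2) (6 * U y * deriv U y) y := by
      have := (hu.pow 2).const_mul 3
      exact this.congr_deriv (by ring)
    exact (h1.add h2 : _)
  have hzero : (∫ y in (0:ℝ)..1, opg U y) = 0 := by
    rw [intervalIntegral.integral_eq_sub_of_hasDerivAt (fun y _ => hd2 y)
      (hcg.intervalIntegrable 0 1)]
    have p2 : iteratedDeriv 2 U 1 = iteratedDeriv 2 U 0 := by
      have h := periodic_deriv' (periodic_deriv' hper) 0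
      simpa [show (2:ℕ) = 1 + 1 from rfl, iteratedDeriv_succ, iteratedDeriv_one] using h
    have p0 : U 1 = U 0 := by simpa using hper 0
    rw [p2, p0]; ring
  -- avg is unchanged
  have havg : ∀ ε : ℝ, avg (fun y => U y + ε * opg U y) = avg U := by
    intro ε
    unfold avg
    beta_reduce
    rw [intervalIntegral.integral_add (f := U) (g := fun y => ε * opg U y) (hU.continuous.intervalIntegrable 0 1)
      ((continuous_const.mul hcg : Continuous (fun y => ε * opg U y)).intervalIntegrable 0 1),
      intervalIntegral.integral_const_mul, hzero, mul_zero, add_zero]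
  set a := avg U with ha
  set T := iteratedDeriv 3 U x with hT
  set D := deriv U x with hD
  -- third derivative of perturbed function
  have haff : ∀ ε : ℝ, iteratedDeriv 3 (fun y => U y + ε * opf U y) x = (1 + ε * a) * T := by
    intro ε
    have heq : (fun y => U y + ε * opf U y) = fun y => (1 + ε * a) * U y + (-(ε * a * a)) := by
      funext y
      simp only [opf, ← ha]
      ring
    rw [heq, iteratedDeriv_affine _ _ hU]
  -- first derivative of perturbed function
  have hder : ∀ ε : ℝ, deriv (fun y => U y + ε * opf U y) x = (1 + ε * a) * D := by
    intro ε
    have hu : HasDerivAt U D x := (hUd x).hasDerivAt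
    have h : HasDerivAt (fun y => U y + ε * opf U y) (D + ε * (a * D)) x := by
      have h2 : HasDerivAt (fun y => ε * opf U y) (ε * (a * D)) x := by
        have : HasDerivAt (fun y => opf U y) (a * D) x := by
          simp only [opf, ← ha]
          exact (hu.sub_const a).const_mul a
        exact this.const_mul ε
      exact hu.add h2
    rw [h.deriv]; ring
  -- the function of ε is an explicit quadratic polynomial
  have hfun : (fun ε : ℝ =>
      opf (fun y => U y + ε * opg U y) x - opg (fun y => U y + ε * opf U y) x)
      = fun ε : ℝ => (a * U x - a ^ 2 - T - 6 * U x * D)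
        + (-6 * a * U x * D + 6 * a ^ 2 * D) * ε
        + (-6 * a * (a * (U x - a)) * D) * (ε * ε) := by
    funext ε
    have h1 : opf (fun y => U y + ε * opg U y) x = a * (U x + ε * opg U x - a) := by
      simp only [opf, havg ε, ← ha]
    have h2 : opg (fun y => U y + ε * opf U y) x
        = (1 + ε * a) * T + 6 * (U x + ε * (a * (U x - a))) * ((1 + ε * a) * D) := by
      simp only [opg]
      rw [haff ε, hder ε]
      simp only [opf, ← ha]
    rw [h1, h2]
    simp only [opg, ← hT, ← hD]
    ring
  rw [hfun]
  have hpoly : HasDerivAt (fun ε : ℝ => (a * U x - a ^ 2 - T - 6 * U x * D)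
        + (-6 * a * U x * D + 6 * a ^ 2 * D) * ε
        + (-6 * a * (a * (U x - a)) * D) * (ε * ε))
      ((-6 * a * U x * D + 6 * a ^ 2 * D) * 1
        + (-6 * a * (a * (U x - a)) * D) * (1 * 0 + 0 * 1)) 0 := by
    exact (((hasDerivAt_id (0:ℝ)).const_mul _).const_add _).add
      (((hasDerivAt_id (0:ℝ)).mul (hasDerivAt_id 0)).const_mul _)
  convert hpoly using 1
  ring
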